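/- arXiv:1304.4685 — 2 statements merged into one kernel-verified Lean document; each statement's English description precedes it below -/
import Mathlib

section
/- Define x⁰ = 0 ∈ ℝⁿ, y⁰ = z⁰ = e, λ⁰ᵢ = 4(1+‖c‖²) − cᵢ/2 and γ⁰ᵢ = 4(1+‖c‖²) + cᵢ/2 for i = 1,…,n. Then (x⁰,y⁰,z⁰,λ⁰,γ⁰) is strictly feasible, its duality gap equals μ⁰ = 4(1+‖c‖²), and ‖p⁰∘ω⁰ − μ⁰e‖ ≤ 0.19·μ⁰, so the point lies in the neighborhood N₂(0.19). -/
open scoped BigOperators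

noncomputable section

/-- Euclidean dot product of two vectors. -/
def dotp {ι : Type*} [Fintype ι] (u v : ι → ℝ) : ℝ := ∑ i, u i * v i

/-- Euclidean norm of a vector. -/
def enorm' {ι : Type*} [Fintype ι] (u : ι → ℝ) : ℝ := Real.sqrt (∑ i, (u i) ^ 2)

/-- Strict feasibility for the box-constrained QP KKT system. -/
def StrictlyFeasible {n : ℕ} (H : Matrix (Fin n) (Fin n) ℝ)
    (c x y z lam gam : Fin n → ℝ) : Prop :=
  H.mulVec x + c + lam - gam = 0 ∧
  x + y = (fun _ => 1) ∧
  x - z = (fun _ => -1) ∧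
  (∀ i, 0 < y i) ∧ (∀ i, 0 < z i) ∧ (∀ i, 0 < lam i) ∧ (∀ i, 0 < gam i)

/-- The central-path neighborhood `N₂(θ)`. -/
def N2 {n : ℕ} (H : Matrix (Fin n) (Fin n) ℝ) (c : Fin n → ℝ) (θ : ℝ)
    (x y z lam gam : Fin n → ℝ) : Prop :=
  StrictlyFeasible H c x y z lam gam ∧
  enorm' (Sum.elim y z * Sum.elim lam gam
      - fun _ => dotp (Sum.elim y z) (Sum.elim lam gam) / (2 * (n : ℝ)))
    ≤ θ * (dotp (Sum.elim y z) (Sum.elim lam gam) / (2 * (n : ℝ)))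

/-- First-derivative direction of the arc at a point `(x,y,z,λ,γ)`. -/
def FirstDir {n : ℕ} (H : Matrix (Fin n) (Fin n) ℝ)
    (y z lam gam xd yd zd ld gd : Fin n → ℝ) : Prop :=
  H.mulVec xd + ld - gd = 0 ∧ yd = -xd ∧ zd = xd ∧
  lam * yd + y * ld = lam * y ∧ gam * zd + z * gd = gam * z

/-- Second-derivative direction of the arc at a point `(x,y,z,λ,γ)`. -/
def SecondDir {n : ℕ} (H : Matrix (Fin n) (Fin n) ℝ)
    (y z lam gam yd zd ld gd xdd ydd zdd ldd gdd : Fin n → ℝ) : Prop :=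
  H.mulVec xdd + ldd - gdd = 0 ∧ ydd = -xdd ∧ zdd = xdd ∧
  lam * ydd + y * ldd = (-2 : ℝ) • (ld * yd) ∧
  gam * zdd + z * gdd = (-2 : ℝ) • (gd * zd)

/-- The ellipse (arc) approximation point: `v(α) = v - v̇·sin α + v̈·(1 - cos α)`. -/
def arc {n : ℕ} (v vd vdd : Fin n → ℝ) (α : ℝ) : Fin n → ℝ :=
  v - Real.sin α • vd + (1 - Real.cos α) • vdd

/-- Corrector (centering) direction at a point `(x,y,z,λ,γ)` with target `μ`. -/
def CorrDir {n : ℕ} (H : Matrix (Fin n) (Fin n) ℝ)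
    (y z lam gam dx dy dz dl dg : Fin n → ℝ) (mu : ℝ) : Prop :=
  H.mulVec dx + dl - dg = 0 ∧ dy = -dx ∧ dz = dx ∧
  lam * dy + y * dl = (fun _ => mu) - lam * y ∧
  gam * dz + z * dg = (fun _ => mu) - gam * z

/-! With y⁰ = z⁰ = e, λ⁰ = μe − c/2 and γ⁰ = μe + c/2, the shifts ±c/2 cancel in the duality gap,
so the gap is μ, and the complementarity residual p⁰∘ω⁰ − μe is (−c/2, c/2), of norm ‖c‖/√2.
For μ = 4(1 + ‖c‖²) ≥ 8‖c‖ this is far below 0.19 μ, and μ > |cᵢ|/2 gives positivity. -/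

section EuclideanNorm

variable {ι : Type*} [Fintype ι]

lemma enorm'_sq (u : ι → ℝ) : enorm' u ^ 2 = ∑ i, u i ^ 2 :=
  Real.sq_sqrt (Finset.sum_nonneg fun i _ => sq_nonneg (u i))

lemma enorm'_nonneg (u : ι → ℝ) : 0 ≤ enorm' u :=
  Real.sqrt_nonneg _

lemma abs_le_enorm' (u : ι → ℝ) (i : ι) : |u i| ≤ enorm' u := by
  rw [← Real.sqrt_sq_eq_abs]
  exact Real.sqrt_le_sqrt (Finset.single_le_sum (fun j _ => sq_nonneg (u j)) (Finset.mem_univ i))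

lemma enorm'_le_of_sq_le {u : ι → ℝ} {B : ℝ} (hB : 0 ≤ B) (h : enorm' u ^ 2 ≤ B ^ 2) :
    enorm' u ≤ B :=
  (pow_le_pow_iff_left₀ (enorm'_nonneg u) hB two_ne_zero).mp h

end EuclideanNorm

section ShiftedPoint

variable {n : ℕ} (c : Fin n → ℝ) (μ : ℝ)

lemma strictlyFeasible_shift (H : Matrix (Fin n) (Fin n) ℝ) (hμ : ∀ i, |c i| < 2 * μ) :
    StrictlyFeasible H c 0 (fun _ => 1) (fun _ => 1)
      (fun i => μ - c i / 2) (fun i => μ + c i / 2) := by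
  refine ⟨?_, ?_, ?_, fun _ => one_pos, fun _ => one_pos, fun i => ?_, fun i => ?_⟩
  · funext i
    simp only [Matrix.mulVec_zero, Pi.add_apply, Pi.sub_apply, Pi.zero_apply]
    ring
  · funext i; simp
  · funext i; simp
  · linarith [le_abs_self (c i), hμ i]
  · linarith [neg_abs_le (c i), hμ i]

lemma dotp_shift :
    dotp (Sum.elim (fun _ : Fin n => (1 : ℝ)) fun _ => 1)
      (Sum.elim (fun i => μ - c i / 2) fun i => μ + c i / 2) = 2 * n * μ := by
  simp only [dotp, Fintype.sum_sum_type, Sum.elim_inl, Sum.elim_inr, one_mul,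
    ← Finset.sum_add_distrib, sub_add_add_cancel, Finset.sum_const, Finset.card_univ,
    Fintype.card_fin, nsmul_eq_mul]
  ring

lemma enorm'_sq_complementarity_residual_shift :
    enorm' ((Sum.elim (fun _ : Fin n => (1 : ℝ)) fun _ => 1) *
        Sum.elim (fun i => μ - c i / 2) (fun i => μ + c i / 2) - fun _ => μ) ^ 2 =
      enorm' c ^ 2 / 2 := by
  simp only [enorm'_sq, Fintype.sum_sum_type, Pi.sub_apply, Pi.mul_apply, Sum.elim_inl,
    Sum.elim_inr, ← Finset.sum_add_distrib, Finset.sum_div]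
  exact Finset.sum_congr rfl fun i _ => by ring

end ShiftedPoint

lemma sq_div_two_le_centrality_bound_sq (s : ℝ) : s ^ 2 / 2 ≤ (0.19 * (4 * (1 + s ^ 2))) ^ 2 := by
  nlinarith [sq_nonneg (1 - s ^ 2), sq_nonneg s, sq_nonneg (1 - s), sq_nonneg (1 + s)]

theorem stmt_1_general {n : ℕ} (hn : 0 < n) (H : Matrix (Fin n) (Fin n) ℝ)
    (c : Fin n → ℝ)
    (x0 y0 z0 lam0 gam0 : Fin n → ℝ)
    (hx0 : x0 = 0) (hy0 : y0 = fun _ => 1) (hz0 : z0 = fun _ => 1)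
    (hlam0 : lam0 = fun i => 4 * (1 + (enorm' c) ^ 2) - c i / 2)
    (hgam0 : gam0 = fun i => 4 * (1 + (enorm' c) ^ 2) + c i / 2)
    (p0 w0 : Fin n ⊕ Fin n → ℝ)
    (hp0 : p0 = Sum.elim y0 z0) (hw0 : w0 = Sum.elim lam0 gam0)
    (mu0 : ℝ) (hmu0 : mu0 = dotp p0 w0 / (2 * (n : ℝ))) :
    StrictlyFeasible H c x0 y0 z0 lam0 gam0 ∧
    mu0 = 4 * (1 + (enorm' c) ^ 2) ∧
    enorm' (p0 * w0 - fun _ => mu0) ≤ 0.19 * mu0 ∧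
    N2 H c 0.19 x0 y0 z0 lam0 gam0 := by
  subst hx0 hy0 hz0 hlam0 hgam0 hp0 hw0
  set μ := 4 * (1 + enorm' c ^ 2) with hμ
  have hfeas := strictlyFeasible_shift c μ H fun i => by
    nlinarith [abs_le_enorm' c i, enorm'_nonneg c, hμ]
  obtain rfl : mu0 = μ := by
    rw [hmu0, dotp_shift]
    field_simp
  have hres : enorm' _ ≤ 0.19 * μ := enorm'_le_of_sq_le (by positivity)
    ((enorm'_sq_complementarity_residual_shift c μ).trans_le
      (sq_div_two_le_centrality_bound_sq (enorm' c)))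
  refine ⟨hfeas, rfl, hres, hfeas, ?_⟩
  rwa [← hmu0]

/-- the explicit initial point is strictly feasible, has duality gap
`μ⁰ = 4(1+‖c‖²)`, satisfies `‖p⁰∘ω⁰ − μ⁰e‖ ≤ 0.19·μ⁰`, and hence lies in `N₂(0.19)`. -/
theorem stmt_1 {n : ℕ} (hn : 0 < n) (H : Matrix (Fin n) (Fin n) ℝ) (hH : H.PosDef)
    (c : Fin n → ℝ)
    (x0 y0 z0 lam0 gam0 : Fin n → ℝ)
    (hx0 : x0 = 0) (hy0 : y0 = fun _ => 1) (hz0 : z0 = fun _ => 1)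
    (hlam0 : lam0 = fun i => 4 * (1 + (enorm' c) ^ 2) - c i / 2)
    (hgam0 : gam0 = fun i => 4 * (1 + (enorm' c) ^ 2) + c i / 2)
    (p0 w0 : Fin n ⊕ Fin n → ℝ)
    (hp0 : p0 = Sum.elim y0 z0) (hw0 : w0 = Sum.elim lam0 gam0)
    (mu0 : ℝ) (hmu0 : mu0 = dotp p0 w0 / (2 * (n : ℝ))) :
    StrictlyFeasible H c x0 y0 z0 lam0 gam0 ∧
    mu0 = 4 * (1 + (enorm' c) ^ 2) ∧
    enorm' (p0 * w0 - fun _ => mu0) ≤ 0.19 * mu0 ∧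
    N2 H c 0.19 x0 y0 z0 lam0 gam0 :=
  stmt_1_general hn H c x0 y0 z0 lam0 gam0 hx0 hy0 hz0 hlam0 hgam0 p0 w0 hp0 hw0 mu0 hmu0

end
end

section
/- Let θ ∈ (0,1), let (x,y,z,λ,γ) ∈ N₂(θ) with duality gap μ, let (ẋ,ẏ,ż,λ̇,γ̇) and (ẍ,ÿ,z̈,λ̈,γ̈) be first- and second-derivative directions, and for α ∈ [0,π/2] let μ(α) be the duality gap of the arc point. Then μ(α) = μ(1−sinα) + (1/(2n))(p̈ᵀω̈ − ṗᵀω̇)(1−cosα)² − (1/(2n))(ṗᵀω̈ + p̈ᵀω̇)·sinα·(1−cosα), and consequently μ(1−sinα) − (1/(2n))(ẋᵀHẋ)((1−cosα)² + sin²α) ≤ μ(α) ≤ μ(1−sinα) + (1/(2n))(ẍᵀHẍ)((1−cosα)² + sin²α). -/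
open scoped BigOperators

noncomputable section

lemma dotp_eq {ι : Type*} [Fintype ι] (u v : ι → ℝ) : dotp u v = dotProduct u v := rfl


/-! The duality gap along the arc is a quadratic polynomial in `s = sin α` and `t = 1 - cos α`.
The complementarity equations of the two derivative directions turn its linear part into
`pᵀω (1 - s) - 2t ṗᵀω̇`, and `s² = 2t - t²` makes the `ṗᵀω̇`-terms collapse to `-t² ṗᵀω̇`.
Since `ẏ = -ẋ`, `ż = ẋ` and `Hẋ = γ̇ - λ̇` (likewise for the second derivatives), the products
`ṗᵀω̇`, `p̈ᵀω̈`, `ṗᵀω̈ + p̈ᵀω̇` are the quadratic and bilinear forms of `H` in `ẋ, ẍ`. The two bounds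
are then `(s ẋ - t ẍ)ᵀ H (s ẋ - t ẍ) ≥ 0` and `(t ẋ + s ẍ)ᵀ H (t ẋ + s ẍ) ≥ 0`. -/

section DotProduct

variable {ι κ : Type*} [Fintype ι] [Fintype κ]

lemma dotp_eq_dotProduct (u v : ι → ℝ) : dotp u v = u ⬝ᵥ v := rfl

lemma dotp_sum_elim (a c : ι → ℝ) (b d : κ → ℝ) :
    dotp (Sum.elim a b) (Sum.elim c d) = dotp a c + dotp b d := by
  simp [dotp, Fintype.sum_sum_type]

lemma dotp_add_dotp_of_mul_add_mul {a b c d e f : ι → ℝ} {r : ℝ}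
    (h : a * b + c * d = r • (e * f)) : dotp a b + dotp c d = r * dotp e f := by
  simp only [dotp, ← Finset.sum_add_distrib, Finset.mul_sum]
  exact Finset.sum_congr rfl fun i _ => by simpa [mul_assoc] using congrFun h i

lemma dotp_sub_smul_add_smul (u u' u'' v v' v'' : ι → ℝ) (s t : ℝ) :
    dotp (u - s • u' + t • u'') (v - s • v' + t • v'')
      = dotp u v - s * (dotp u v' + dotp u' v) + t * (dotp u v'' + dotp u'' v)
        + s ^ 2 * dotp u' v' + t ^ 2 * dotp u'' v''
        - s * t * (dotp u' v'' + dotp u'' v') := by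
  simp only [dotp, Finset.mul_sum, ← Finset.sum_add_distrib, ← Finset.sum_sub_distrib]
  exact Finset.sum_congr rfl fun i _ => by
    simp only [Pi.add_apply, Pi.sub_apply, Pi.smul_apply, smul_eq_mul]; ring

lemma dotp_arc_of_complementarity {p p' p'' w w' w'' : ι → ℝ} (α : ℝ)
    (h₁ : dotp p w' + dotp p' w = dotp p w)
    (h₂ : dotp p w'' + dotp p'' w = -2 * dotp p' w') :
    dotp (p - Real.sin α • p' + (1 - Real.cos α) • p'')
        (w - Real.sin α • w' + (1 - Real.cos α) • w'')
      = dotp p w * (1 - Real.sin α) + (dotp p'' w'' - dotp p' w') * (1 - Real.cos α) ^ 2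
        - (dotp p' w'' + dotp p'' w') * Real.sin α * (1 - Real.cos α) := by
  have hsin : Real.sin α ^ 2 = 2 * (1 - Real.cos α) - (1 - Real.cos α) ^ 2 := by
    linear_combination Real.sin_sq_add_cos_sq α
  rw [dotp_sub_smul_add_smul, h₁, h₂, hsin]
  ring

lemma dotp_sum_elim_neg_eq_dotp_mulVec (H : Matrix ι ι ℝ) {u v l g : ι → ℝ}
    (h : H.mulVec v + l - g = 0) :
    dotp (Sum.elim (-u) u) (Sum.elim l g) = dotp u (H.mulVec v) := by
  rw [dotp_sum_elim, show H.mulVec v = g - l by rw [← sub_eq_zero, ← h]; abel]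
  simp only [dotp, Pi.neg_apply, Pi.sub_apply, ← Finset.sum_add_distrib]
  exact Finset.sum_congr rfl fun i _ => by ring

lemma Matrix.PosSemidef.cross_term_bounds {H : Matrix ι ι ℝ} (hH : H.PosSemidef) (u v : ι → ℝ)
    (s t : ℝ) :
    -dotp u (H.mulVec u) * (t ^ 2 + s ^ 2)
        ≤ (dotp v (H.mulVec v) - dotp u (H.mulVec u)) * t ^ 2
          - (dotp u (H.mulVec v) + dotp v (H.mulVec u)) * s * t ∧
      (dotp v (H.mulVec v) - dotp u (H.mulVec u)) * t ^ 2
          - (dotp u (H.mulVec v) + dotp v (H.mulVec u)) * s * t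
        ≤ dotp v (H.mulVec v) * (t ^ 2 + s ^ 2) := by
  have h₁ := hH.dotProduct_mulVec_nonneg (s • u - t • v)
  have h₂ := hH.dotProduct_mulVec_nonneg (t • u + s • v)
  simp only [star_trivial, Matrix.mulVec_sub, Matrix.mulVec_add, Matrix.mulVec_smul,
    dotProduct_sub, sub_dotProduct, dotProduct_add, add_dotProduct, dotProduct_smul,
    smul_dotProduct, smul_eq_mul] at h₁ h₂
  simp only [dotp_eq_dotProduct]
  constructor
  · linear_combination h₁
  · linear_combination h₂

end DotProduct

lemma sum_elim_arc {n : ℕ} (y yd ydd z zd zdd : Fin n → ℝ) (α : ℝ) :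
    Sum.elim (arc y yd ydd α) (arc z zd zdd α)
      = Sum.elim y z - Real.sin α • Sum.elim yd zd + (1 - Real.cos α) • Sum.elim ydd zdd := by
  funext i
  cases i <;> simp [arc]

lemma FirstDir.complementarity {n : ℕ} {H : Matrix (Fin n) (Fin n) ℝ}
    {y z lam gam xd yd zd ld gd : Fin n → ℝ} (h : FirstDir H y z lam gam xd yd zd ld gd) :
    dotp (Sum.elim y z) (Sum.elim ld gd) + dotp (Sum.elim yd zd) (Sum.elim lam gam)
      = dotp (Sum.elim y z) (Sum.elim lam gam) := by
  rw [← one_mul (dotp (Sum.elim y z) (Sum.elim lam gam))]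
  refine dotp_add_dotp_of_mul_add_mul (funext fun i => ?_)
  cases i with
  | inl i => simpa [mul_comm, add_comm] using congrFun h.2.2.2.1 i
  | inr i => simpa [mul_comm, add_comm] using congrFun h.2.2.2.2 i

lemma SecondDir.complementarity {n : ℕ} {H : Matrix (Fin n) (Fin n) ℝ}
    {y z lam gam yd zd ld gd xdd ydd zdd ldd gdd : Fin n → ℝ}
    (h : SecondDir H y z lam gam yd zd ld gd xdd ydd zdd ldd gdd) :
    dotp (Sum.elim y z) (Sum.elim ldd gdd) + dotp (Sum.elim ydd zdd) (Sum.elim lam gam)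
      = -2 * dotp (Sum.elim yd zd) (Sum.elim ld gd) := by
  refine dotp_add_dotp_of_mul_add_mul (funext fun i => ?_)
  cases i with
  | inl i => simpa [mul_comm, add_comm] using congrFun h.2.2.2.1 i
  | inr i => simpa [mul_comm, add_comm] using congrFun h.2.2.2.2 i

theorem stmt_7_general {n : ℕ} (H : Matrix (Fin n) (Fin n) ℝ) (hH : H.PosDef)
    (y z lam gam : Fin n → ℝ)
    (xd yd zd ld gd : Fin n → ℝ)
    (hfd : FirstDir H y z lam gam xd yd zd ld gd)
    (xdd ydd zdd ldd gdd : Fin n → ℝ)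
    (hsd : SecondDir H y z lam gam yd zd ld gd xdd ydd zdd ldd gdd)
    (p w pd wd pdd wdd : Fin n ⊕ Fin n → ℝ)
    (hp : p = Sum.elim y z) (hw : w = Sum.elim lam gam)
    (hpd : pd = Sum.elim yd zd) (hwd : wd = Sum.elim ld gd)
    (hpdd : pdd = Sum.elim ydd zdd) (hwdd : wdd = Sum.elim ldd gdd)
    (μ : ℝ) (hμ : μ = dotp p w / (2 * (n : ℝ)))
    (α : ℝ)
    (muA : ℝ)
    (hmuA : muA = dotp (Sum.elim (arc y yd ydd α) (arc z zd zdd α))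
        (Sum.elim (arc lam ld ldd α) (arc gam gd gdd α)) / (2 * (n : ℝ))) :
    muA = μ * (1 - Real.sin α)
        + (1 / (2 * (n : ℝ))) * (dotp pdd wdd - dotp pd wd) * (1 - Real.cos α) ^ 2
        - (1 / (2 * (n : ℝ))) * (dotp pd wdd + dotp pdd wd)
            * Real.sin α * (1 - Real.cos α) ∧
    μ * (1 - Real.sin α)
        - (1 / (2 * (n : ℝ))) * dotp xd (H.mulVec xd)
            * ((1 - Real.cos α) ^ 2 + (Real.sin α) ^ 2) ≤ muA ∧
    muA ≤ μ * (1 - Real.sin α)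
        + (1 / (2 * (n : ℝ))) * dotp xdd (H.mulVec xdd)
            * ((1 - Real.cos α) ^ 2 + (Real.sin α) ^ 2) := by
  subst hp hw hpd hwd hpdd hwdd hμ hmuA
  have hgap := dotp_arc_of_complementarity α hfd.complementarity hsd.complementarity
  rw [← sum_elim_arc, ← sum_elim_arc] at hgap
  obtain ⟨hHd, hyd, hzd, -, -⟩ := hfd
  obtain ⟨hHdd, hydd, hzdd, -, -⟩ := hsd
  have hd : dotp (Sum.elim yd zd) (Sum.elim ld gd) = dotp xd (H.mulVec xd) := by
    rw [hyd, hzd, dotp_sum_elim_neg_eq_dotp_mulVec H hHd]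
  have hdd : dotp (Sum.elim ydd zdd) (Sum.elim ldd gdd) = dotp xdd (H.mulVec xdd) := by
    rw [hydd, hzdd, dotp_sum_elim_neg_eq_dotp_mulVec H hHdd]
  have hcross :
      dotp (Sum.elim yd zd) (Sum.elim ldd gdd) + dotp (Sum.elim ydd zdd) (Sum.elim ld gd) =
        dotp xd (H.mulVec xdd) + dotp xdd (H.mulVec xd) := by
    rw [hyd, hzd, hydd, hzdd, dotp_sum_elim_neg_eq_dotp_mulVec H hHdd,
      dotp_sum_elim_neg_eq_dotp_mulVec H hHd]
  obtain ⟨hlower, hupper⟩ :=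
    hH.posSemidef.cross_term_bounds xd xdd (Real.sin α) (1 - Real.cos α)
  refine ⟨by rw [hgap]; ring, ?_, ?_⟩
  · rw [hgap, hd, hdd, hcross]
    linear_combination (1 / (2 * (n : ℝ))) * hlower
  · rw [hgap, hd, hdd, hcross]
    linear_combination (1 / (2 * (n : ℝ))) * hupper

/-- the exact expression for `μ(α)` and its lower/upper bounds. -/
theorem stmt_7 {n : ℕ} (hn : 0 < n) (H : Matrix (Fin n) (Fin n) ℝ) (hH : H.PosDef)
    (c x y z lam gam : Fin n → ℝ)
    (θ : ℝ) (hθ : θ ∈ Set.Ioo (0 : ℝ) 1)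
    (hN : N2 H c θ x y z lam gam)
    (xd yd zd ld gd : Fin n → ℝ)
    (hfd : FirstDir H y z lam gam xd yd zd ld gd)
    (xdd ydd zdd ldd gdd : Fin n → ℝ)
    (hsd : SecondDir H y z lam gam yd zd ld gd xdd ydd zdd ldd gdd)
    (p w pd wd pdd wdd : Fin n ⊕ Fin n → ℝ)
    (hp : p = Sum.elim y z) (hw : w = Sum.elim lam gam)
    (hpd : pd = Sum.elim yd zd) (hwd : wd = Sum.elim ld gd)
    (hpdd : pdd = Sum.elim ydd zdd) (hwdd : wdd = Sum.elim ldd gdd)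
    (μ : ℝ) (hμ : μ = dotp p w / (2 * (n : ℝ)))
    (α : ℝ) (hα : α ∈ Set.Icc 0 (Real.pi / 2))
    (muA : ℝ)
    (hmuA : muA = dotp (Sum.elim (arc y yd ydd α) (arc z zd zdd α))
        (Sum.elim (arc lam ld ldd α) (arc gam gd gdd α)) / (2 * (n : ℝ))) :
    muA = μ * (1 - Real.sin α)
        + (1 / (2 * (n : ℝ))) * (dotp pdd wdd - dotp pd wd) * (1 - Real.cos α) ^ 2
        - (1 / (2 * (n : ℝ))) * (dotp pd wdd + dotp pdd wd)
            * Real.sin α * (1 - Real.cos α) ∧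
    μ * (1 - Real.sin α)
        - (1 / (2 * (n : ℝ))) * dotp xd (H.mulVec xd)
            * ((1 - Real.cos α) ^ 2 + (Real.sin α) ^ 2) ≤ muA ∧
    muA ≤ μ * (1 - Real.sin α)
        + (1 / (2 * (n : ℝ))) * dotp xdd (H.mulVec xdd)
            * ((1 - Real.cos α) ^ 2 + (Real.sin α) ^ 2) :=
  stmt_7_general H hH y z lam gam xd yd zd ld gd hfd xdd ydd zdd ldd gdd hsd p w pd wd pdd wdd hp hw
    hpd hwd hpdd hwdd μ hμ α muA hmuA

end
end
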